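/- Let A be a Boolean algebra with a non-principal ultrafilter F, and let U = ⋃{(-a)^ | a ∈ F} in UV(A). Then U = ¬¬U (U is regular open in the upset topology of the inclusion order) but U* = ∅, hence U ⊊ U** and U is not regular open in the spectral topology of UV(A). -/
import Mathlib


/-- A proper filter of a Boolean algebra. -/
structure PropFilter (A : Type*) [BooleanAlgebra A] where
  carrier : Set A
  upward : ∀ a b : A, a ∈ carrier → a ≤ b → b ∈ carrier
  inf_mem : ∀ a b : A, a ∈ carrier → b ∈ carrier → a ⊓ b ∈ carrier
  top_mem : (⊤ : A) ∈ carrier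
  proper : (⊥ : A) ∉ carrier

variable {A : Type*} [BooleanAlgebra A]

/-- The basic (sub)basis sets of `UV(A)`. -/
def hat (a : A) : Set (PropFilter A) := {F | a ∈ F.carrier}

/-- The upper Vietoris topology on the set of proper filters, generated by the sets `hat a`. -/
instance uvTop : TopologicalSpace (PropFilter A) :=
  TopologicalSpace.generateFrom {S | ∃ a : A, S = hat a}

/-- The pseudocomplement of a set of proper filters with respect to the upset topology
of the inclusion order. -/
def negSet (V : Set (PropFilter A)) : Set (PropFilter A) :=
  {G | ∀ G' : PropFilter A, G.carrier ⊆ G'.carrier → G' ∉ V}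

lemma inf_compl_eq_bot_iff' {a b : A} : a ⊓ bᶜ = ⊥ ↔ a ≤ b := by
  rw [← sdiff_eq, sdiff_eq_bot_iff]

/-- Extend a proper filter by an element compatible with it. -/
def extFilter (G : PropFilter A) (c : A) (h : ∀ b ∈ G.carrier, b ⊓ c ≠ ⊥) : PropFilter A where
  carrier := {x | ∃ b ∈ G.carrier, b ⊓ c ≤ x}
  upward := fun a b ⟨d, hd, hle⟩ hab => ⟨d, hd, hle.trans hab⟩
  inf_mem := fun a b ⟨d, hd, hda⟩ ⟨e, he, heb⟩ =>
    ⟨d ⊓ e, G.inf_mem _ _ hd he, by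
      have h1 : (d ⊓ e) ⊓ c ≤ (d ⊓ c) ⊓ (e ⊓ c) := by
        rw [show (d ⊓ c) ⊓ (e ⊓ c) = (d ⊓ e) ⊓ (c ⊓ c) from inf_inf_inf_comm d c e c, inf_idem]
      exact h1.trans (inf_le_inf hda heb)⟩
  top_mem := ⟨⊤, G.top_mem, le_top⟩
  proper := fun ⟨b, hb, hle⟩ => h b hb (le_bot_iff.mp hle)

/-- Join of two compatible proper filters. -/
def joinFilter (G H : PropFilter A)
    (h : ∀ b ∈ G.carrier, ∀ a ∈ H.carrier, b ⊓ a ≠ ⊥) : PropFilter A where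
  carrier := {x | ∃ b ∈ G.carrier, ∃ a ∈ H.carrier, b ⊓ a ≤ x}
  upward := fun x y ⟨b, hb, a, ha, hle⟩ hxy => ⟨b, hb, a, ha, hle.trans hxy⟩
  inf_mem := fun x y ⟨b1, hb1, a1, ha1, h1⟩ ⟨b2, hb2, a2, ha2, h2⟩ =>
    ⟨b1 ⊓ b2, G.inf_mem _ _ hb1 hb2, a1 ⊓ a2, H.inf_mem _ _ ha1 ha2, by
      rw [inf_inf_inf_comm]; exact inf_le_inf h1 h2⟩
  top_mem := ⟨⊤, G.top_mem, ⊤, H.top_mem, le_top⟩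
  proper := fun ⟨b, hb, a, ha, hle⟩ => h b hb a ha (le_bot_iff.mp hle)

/-- The principal proper filter on a nonzero element. -/
def princ (a : A) (ha : a ≠ ⊥) : PropFilter A where
  carrier := Set.Ici a
  upward := fun x y hx hxy => le_trans hx hxy
  inf_mem := fun x y hx hy => le_inf hx hy
  top_mem := le_top
  proper := fun h => ha (le_bot_iff.mp h)

lemma hat_inf (a b : A) : hat (a ⊓ b) = hat a ∩ hat b :=
  Set.ext fun G => ⟨fun h => ⟨G.upward _ _ h inf_le_left, G.upward _ _ h inf_le_right⟩,
    fun ⟨h1, h2⟩ => G.inf_mem _ _ h1 h2⟩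

lemma hat_basis :
    TopologicalSpace.IsTopologicalBasis {S : Set (PropFilter A) | ∃ a : A, S = hat a} := by
  refine ⟨?_, ?_, rfl⟩
  · rintro t₁ ⟨a, rfl⟩ t₂ ⟨b, rfl⟩ G hG
    refine ⟨hat (a ⊓ b), ⟨a ⊓ b, rfl⟩, ?_, ?_⟩
    · rw [hat_inf]; exact hG
    · rw [hat_inf]
  · apply Set.eq_univ_of_univ_subset
    intro G _
    exact ⟨hat ⊤, ⟨⊤, rfl⟩, G.top_mem⟩

theorem stmt15 (F : PropFilter A)
    (hultra : ∀ a : A, a ∈ F.carrier ∨ aᶜ ∈ F.carrier)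
    (hnp : ¬ ∃ c : A, F.carrier = Set.Ici c)
    (U : Set (PropFilter A))
    (hU : U = {G : PropFilter A | ∃ a ∈ F.carrier, aᶜ ∈ G.carrier}) :
    negSet (negSet U) = U ∧
    interior Uᶜ = (∅ : Set (PropFilter A)) ∧
    U ⊂ interior ((interior Uᶜ)ᶜ) ∧
    U ≠ interior (closure U) := by
  -- F itself is not in U
  have hFnotU : F ∉ U := by
    rw [hU]
    rintro ⟨a, haF, hacF⟩
    have := F.inf_mem _ _ haF hacF
    rw [inf_compl_eq_bot] at this
    exact F.proper this
  -- negSet U is exactly the set of extensions of F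
  have hneg : negSet U = {G : PropFilter A | F.carrier ⊆ G.carrier} := by
    ext G
    constructor
    · intro hG a haF
      by_contra haG
      have hne : ∀ b ∈ G.carrier, b ⊓ aᶜ ≠ ⊥ := fun b hb hbot =>
        haG (G.upward _ _ hb (inf_compl_eq_bot_iff'.mp hbot))
      refine hG (extFilter G aᶜ hne) (fun b hb => ⟨b, hb, inf_le_left⟩) ?_
      rw [hU]
      exact ⟨a, haF, ⟨⊤, G.top_mem, by simp⟩⟩
    · intro hFG G' hGG' hG'U
      rw [hU] at hG'U
      obtain ⟨a, haF, hac⟩ := hG'U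
      have := G'.inf_mem _ _ (hGG' (hFG haF)) hac
      rw [inf_compl_eq_bot] at this
      exact G'.proper this
  -- Part 1
  have part1 : negSet (negSet U) = U := by
    rw [hneg]
    ext G
    constructor
    · intro hG
      by_contra hGU
      have hne : ∀ b ∈ G.carrier, ∀ a ∈ F.carrier, b ⊓ a ≠ ⊥ := by
        intro b hb a ha hbot
        apply hGU
        rw [hU]
        exact ⟨a, ha, G.upward _ _ hb
          (le_compl_iff_disjoint_right.mpr (disjoint_iff.mpr hbot))⟩
      refine hG (joinFilter G F hne) (fun b hb => ⟨b, hb, ⊤, F.top_mem, by simp⟩) ?_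
      intro a ha
      exact ⟨⊤, G.top_mem, a, ha, by simp⟩
    · intro hGU G' hGG' hFG'
      rw [hU] at hGU
      obtain ⟨a, haF, hac⟩ := hGU
      have := G'.inf_mem _ _ (hFG' haF) (hGG' hac)
      rw [inf_compl_eq_bot] at this
      exact G'.proper this
  -- Part 2
  have part2 : interior Uᶜ = (∅ : Set (PropFilter A)) := by
    rw [Set.eq_empty_iff_forall_notMem]
    intro G hG
    obtain ⟨t, ⟨a, rfl⟩, haG, hsub⟩ :=
      hat_basis.exists_subset_of_mem_open hG isOpen_interior
    have hsub' : hat a ⊆ Uᶜ := hsub.trans interior_subset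
    have ha_ne : a ≠ ⊥ := fun h => G.proper (h ▸ haG)
    have hex : ∃ b ∈ F.carrier, a ⊓ bᶜ ≠ ⊥ := by
      by_contra h
      push_neg at h
      have hle : ∀ b ∈ F.carrier, a ≤ b := fun b hb => inf_compl_eq_bot_iff'.mp (h b hb)
      have haF : a ∈ F.carrier := by
        rcases hultra a with h1 | h1
        · exact h1
        · have h2 : a ≤ aᶜ := hle _ h1
          have h3 : a = ⊥ := by
            have := inf_le_inf_left a h2
            rw [inf_idem, inf_compl_eq_bot] at this
            exact le_bot_iff.mp this
          exact absurd h3 ha_ne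
      exact hnp ⟨a, Set.Subset.antisymm (fun b hb => hle b hb)
        (fun b hb => F.upward a b haF hb)⟩
    obtain ⟨b, hbF, hne⟩ := hex
    have hmemU : princ (a ⊓ bᶜ) hne ∈ U := by
      rw [hU]
      exact ⟨b, hbF, (inf_le_right : a ⊓ bᶜ ≤ bᶜ)⟩
    exact hsub' (show princ (a ⊓ bᶜ) hne ∈ hat a from inf_le_left) hmemU
  have hUneq : U ≠ Set.univ := fun h => hFnotU (h ▸ Set.mem_univ F)
  refine ⟨part1, part2, ?_, ?_⟩
  · rw [part2]
    simp only [Set.compl_empty, interior_univ]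
    exact Set.ssubset_univ_iff.mpr hUneq
  · have hcl : closure U = Set.univ := by
      rw [closure_eq_compl_interior_compl, part2, Set.compl_empty]
    rw [hcl, interior_univ]
    exact hUneq
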